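/- arXiv:2601.15350 — 3 statements merged into one kernel-verified Lean document; each statement's English description precedes it below -/
import Mathlib

section
/- If b ≥ λ > 0 and 0 ≤ θ ≤ 1 with θ < 1, then all three eigenvalues -2b(1-θ), -2b - 3λ - bθ - √((bθ+λ)² + 8λ²), and -2b - 3λ - bθ + √((bθ+λ)² + 8λ²) of the matrix 2·[[-(b+λ), -(bθ+λ), λ],[-(bθ+λ), -(b+λ), λ],[λ, λ, -(b+λ)]] are negative; consequently the matrix is negative definite. -/
/-!
The vector `(1, -1, 0)` is an eigenvector for the eigenvalue `-2b(1 - θ)`, and the two remaining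
eigenvalues are those of the block acting on `(x₀ + x₁, x₂)`. The larger of them is negative because
`(2b + 3λ + bθ)² - (bθ + λ)² - 8λ² = 4b((1 + θ)b + (3 + θ)λ) > 0`.

For negative definiteness, completing the square in `x₂` writes `(b + λ)` times the quadratic form of
the negated matrix as a sum of squares of `x₀ - x₁`, `x₀ + x₁` and `(b + λ)x₂ - λ(x₀ + x₁)` with
positive weights.
-/

open Matrix

def pmgHessian (b l θ : ℝ) : Matrix (Fin 3) (Fin 3) ℝ :=
  (2 : ℝ) • !![-(b + l), -(b * θ + l), l;
              -(b * θ + l), -(b + l), l;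
              l, l, -(b + l)]

section PMGHessian

variable {b l θ : ℝ}

lemma sqrt_discriminant_lt (hb : 0 < b) (hl : 0 ≤ l) (hθ : -1 < θ) :
    √((b * θ + l) ^ 2 + 8 * l ^ 2) < 2 * b + 3 * l + b * θ := by
  have hbθ : 0 < b * (1 + θ) := mul_pos hb (by linarith)
  rw [Real.sqrt_lt' (by nlinarith)]
  nlinarith [mul_nonneg hb.le hl, mul_nonneg hbθ.le hl]

lemma isHermitian_neg_pmgHessian : (-pmgHessian b l θ).IsHermitian := by
  refine IsHermitian.neg (IsHermitian.ext fun i j => ?_)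
  fin_cases i <;> fin_cases j <;> simp [pmgHessian]

lemma mul_dotProduct_neg_pmgHessian_mulVec (x : Fin 3 → ℝ) :
    (b + l) * (x ⬝ᵥ (-pmgHessian b l θ) *ᵥ x) =
      b * (1 - θ) * (b + l) * (x 0 - x 1) ^ 2 + 2 * ((b + l) * x 2 - l * (x 0 + x 1)) ^ 2
        + b * ((1 + θ) * (b + l) + 2 * l) * (x 0 + x 1) ^ 2 := by
  simp [pmgHessian, dotProduct, mulVec, Fin.sum_univ_three]
  ring

lemma posDef_neg_pmgHessian (hb : 0 < b) (hl : 0 ≤ l) (hθ : -1 < θ) (hθ1 : θ < 1) :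
    (-pmgHessian b l θ).PosDef := by
  refine PosDef.of_dotProduct_mulVec_pos isHermitian_neg_pmgHessian fun x hx => ?_
  have hbl : 0 < b + l := by linarith
  have c₁ : 0 < b * (1 - θ) * (b + l) := by have := sub_pos.2 hθ1; positivity
  have c₃ : 0 < b * ((1 + θ) * (b + l) + 2 * l) := by
    have := neg_lt_iff_pos_add'.1 hθ; positivity
  rw [star_trivial, ← mul_pos_iff_of_pos_left hbl, mul_dotProduct_neg_pmgHessian_mulVec]
  refine lt_of_le_of_ne (by positivity) fun hsum => hx ?_
  obtain ⟨h₁₂, h₃⟩ := (add_eq_zero_iff_of_nonneg (by positivity) (by positivity)).1 hsum.symm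
  obtain ⟨h₁, h₂⟩ := (add_eq_zero_iff_of_nonneg (by positivity) (by positivity)).1 h₁₂
  simp only [mul_eq_zero, c₁.ne', c₃.ne', two_ne_zero, false_or,
    pow_eq_zero_iff two_ne_zero] at h₁ h₂ h₃
  have hx₀ : x 0 = 0 := by linarith
  have hx₁ : x 1 = 0 := by linarith
  have hx₂ : x 2 = 0 := by simpa [hx₀, hx₁, hbl.ne'] using h₂
  ext i
  fin_cases i <;> assumption

end PMGHessian

/-- If `b ≥ λ > 0` and `0 ≤ θ < 1`, then the three eigenvalues of
`2 • ![![-(b+λ),-(bθ+λ),λ],![-(bθ+λ),-(b+λ),λ],![λ,λ,-(b+λ)]]` are negative, and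
consequently the matrix is negative definite (its negation is positive definite). -/
theorem stmt1 (b l θ : ℝ) (hbl : b ≥ l) (hl : 0 < l) (hθ0 : 0 ≤ θ) (hθ1 : θ < 1) :
    (-2 * b * (1 - θ) < 0) ∧
    (-2 * b - 3 * l - b * θ - Real.sqrt ((b * θ + l) ^ 2 + 8 * l ^ 2) < 0) ∧
    (-2 * b - 3 * l - b * θ + Real.sqrt ((b * θ + l) ^ 2 + 8 * l ^ 2) < 0) ∧
    (-((2 : ℝ) • !![-(b + l), -(b * θ + l), l;
                    -(b * θ + l), -(b + l), l;
                    l, l, -(b + l)])).PosDef := by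
  have hb : 0 < b := hl.trans_le hbl
  have hθ : -1 < θ := by linarith
  have hsqrt := sqrt_discriminant_lt hb hl.le hθ
  have hsqrt_nonneg := Real.sqrt_nonneg ((b * θ + l) ^ 2 + 8 * l ^ 2)
  have hgap : 0 < b * (1 - θ) := mul_pos hb (sub_pos.2 hθ1)
  exact ⟨by linarith, by linarith, by linarith, posDef_neg_pmgHessian hb hl.le hθ hθ1⟩
end

section
/- The symmetric 3×3 matrix 2·[[-t1, -t2, (3/2)λ],[-t2, -t1, (3/2)λ],[(3/2)λ, (3/2)λ, -2t1 - αs]], with t1 = b + λ, t2 = bθ + λ, has eigenvalues e1 = -2b(1-θ), and e± = -αs - bθ - 3b - 4λ ± ψ where ψ = √((αs)² - 2αs·bθ + 2αs·b + b²θ² - 2b²θ + b² + 18λ²); moreover if b ≥ λ > 0, 0 ≤ θ < 1, s > 0 and 0 ≤ α ≤ 1, all eigenvalues are negative. -/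
/-!
Swapping the first two coordinates is a symmetry of the matrix, so `(1, -1, 0)` is an
eigenvector, with eigenvalue `a - c`; on the invariant plane spanned by `(1, 1, 0)` and
`(0, 0, 1)` the matrix acts by `[[a + c, d], [2d, e]]`, whose eigenvalues are `m ± ψ` with
`2m` its trace. For the negativity, `m < 0` and `ψ² < m²`.
-/

open Matrix Polynomial

theorem Matrix.charpoly_of_swap_symmetric {R : Type*} [CommRing R] {a c d e m ψ : R}
    (hm : 2 * m = a + c + e) (hψ : ψ ^ 2 = m ^ 2 - (a + c) * e + 2 * d ^ 2) :
    (!![a, c, d; c, a, d; d, d, e]).charpoly =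
      (X - C (a - c)) * (X - C (m - ψ)) * (X - C (m + ψ)) := by
  have hm' : 2 * C m = C a + C c + C e := by simpa [map_ofNat] using congrArg C hm
  have hψ' : C ψ ^ 2 = C m ^ 2 - (C a + C c) * C e + 2 * C d ^ 2 := by
    simpa [map_ofNat] using congrArg C hψ
  rw [charpoly, det_fin_three]
  simp [charmatrix_apply_eq, charmatrix_apply_ne]
  linear_combination (X - C a + C c) * X * hm' + (X - C a + C c) * hψ'

theorem Real.add_sqrt_neg {m D : ℝ} (hm : m < 0) (hD : D < m ^ 2) : m + √D < 0 := by
  have : √D < -m := (Real.sqrt_lt' (neg_pos.mpr hm)).mpr (by rwa [neg_sq])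
  linarith

theorem stmt4_general (b l θ s α : ℝ) (hbl : b ≥ l) (hl : 0 < l) (hθ0 : 0 ≤ θ) (hθ1 : θ < 1)
    (hs : 0 < s) (hα0 : 0 ≤ α)
    (t1 t2 ψ : ℝ) (ht1 : t1 = b + l) (ht2 : t2 = b * θ + l)
    (hψ : ψ = Real.sqrt ((α * s) ^ 2 - 2 * (α * s) * (b * θ) + 2 * (α * s) * b
        + b ^ 2 * θ ^ 2 - 2 * b ^ 2 * θ + b ^ 2 + 18 * l ^ 2)) :
    ((2 : ℝ) • !![-t1, -t2, (3 / 2) * l;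
                  -t2, -t1, (3 / 2) * l;
                  (3 / 2) * l, (3 / 2) * l, -2 * t1 - α * s]).charpoly =
      (X - C (-2 * b * (1 - θ))) *
        (X - C (-(α * s) - b * θ - 3 * b - 4 * l - ψ)) *
        (X - C (-(α * s) - b * θ - 3 * b - 4 * l + ψ)) ∧
    (-2 * b * (1 - θ) < 0) ∧
    (-(α * s) - b * θ - 3 * b - 4 * l - ψ < 0) ∧
    (-(α * s) - b * θ - 3 * b - 4 * l + ψ < 0) := by
  subst ht1 ht2
  have hb : 0 < b := hl.trans_le hbl
  have hαs : 0 ≤ α * s := by positivity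
  have hbθ : 0 ≤ b * θ := by positivity
  replace hψ : ψ = √((α * s + b * (1 - θ)) ^ 2 + 18 * l ^ 2) := by rw [hψ]; ring_nf
  have hψ_sq : ψ ^ 2 = (α * s + b * (1 - θ)) ^ 2 + 18 * l ^ 2 := by
    rw [hψ, Real.sq_sqrt (by positivity)]
  refine ⟨?_, by nlinarith, by linarith [hψ ▸ Real.sqrt_nonneg _],
    hψ ▸ Real.add_sqrt_neg (by linarith) (by nlinarith)⟩
  simp only [smul_of, smul_cons, smul_eq_mul, smul_empty]
  rw [charpoly_of_swap_symmetric (m := -(α * s) - b * θ - 3 * b - 4 * l) (by ring)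
    (by rw [hψ_sq]; ring)]
  congr 4
  ring

/-- The symmetric 3×3 matrix
`2 • ![![-t1,-t2,(3/2)λ],![-t2,-t1,(3/2)λ],![(3/2)λ,(3/2)λ,-2t1-αs]]`, with `t1 = b+λ`,
`t2 = bθ+λ`, has eigenvalues `e1 = -2b(1-θ)` and `e± = -αs - bθ - 3b - 4λ ± ψ` where
`ψ = √((αs)² - 2αs·bθ + 2αs·b + b²θ² - 2b²θ + b² + 18λ²)`; moreover under the
stated hypotheses all eigenvalues are negative. -/
theorem stmt4 (b l θ s α : ℝ) (hbl : b ≥ l) (hl : 0 < l) (hθ0 : 0 ≤ θ) (hθ1 : θ < 1)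
    (hs : 0 < s) (hα0 : 0 ≤ α) (hα1 : α ≤ 1)
    (t1 t2 ψ : ℝ) (ht1 : t1 = b + l) (ht2 : t2 = b * θ + l)
    (hψ : ψ = Real.sqrt ((α * s) ^ 2 - 2 * (α * s) * (b * θ) + 2 * (α * s) * b
        + b ^ 2 * θ ^ 2 - 2 * b ^ 2 * θ + b ^ 2 + 18 * l ^ 2)) :
    ((2 : ℝ) • !![-t1, -t2, (3 / 2) * l;
                  -t2, -t1, (3 / 2) * l;
                  (3 / 2) * l, (3 / 2) * l, -2 * t1 - α * s]).charpoly =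
      (X - C (-2 * b * (1 - θ))) *
        (X - C (-(α * s) - b * θ - 3 * b - 4 * l - ψ)) *
        (X - C (-(α * s) - b * θ - 3 * b - 4 * l + ψ)) ∧
    (-2 * b * (1 - θ) < 0) ∧
    (-(α * s) - b * θ - 3 * b - 4 * l - ψ < 0) ∧
    (-(α * s) - b * θ - 3 * b - 4 * l + ψ < 0) :=
  stmt4_general b l θ s α hbl hl hθ0 hθ1 hs hα0 t1 t2 ψ ht1 ht2 hψ
end

section
/- Consider the first-order system of Theorem 1, sub case 1 (equations (22a)-(22d)) with all base demands, sensitivities and costs as parameters satisfying b(1-θ) > 0 and (b+λ)b(1+θ)+2bλ ≠ 0 and 2b+(1-α)b_s ≠ 0. Then the system of four linear equations in (p₁ⁱ¹, p₁ⁱ², p₁ᵇ, p₂ᵇ) has a unique solution, given by the closed-form expressions (14a)-(14d) of Theorem 1. -/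
/-!
The system is block triangular. The second-period condition involves only `p₂ᵇ` and gives
(14a). In the first period it is convenient to use the shifted prices
`yₖ = p₁ⁱᵏ - cₖ / 2`: the difference of the two item conditions involves only `y₁ - y₂`, the
bundle condition expresses `y₁ + y₂` through `p₁ᵇ`, and substituting this into the sum of the
item conditions leaves one linear equation for `p₁ᵇ`, with coefficient
`2 ((b + λ) b (1 + θ) + 2 b λ)`. Every step is an invertible linear operation, so the closed form
describes all solutions.
-/

variable {K : Type*} [Field K] [CharZero K]

theorem eq_half_mul_div_add_iff {A D c x : K} (hD : D ≠ 0) :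
    x = 1 / 2 * (A / D + c) ↔ 2 * D * x = A + D * c := by
  constructor
  · rintro rfl
    field_simp
  · intro h
    field_simp
    linear_combination h

theorem eq_add_div_two_and_eq_sub_div_two_iff {x y s d : K} :
    x = (s + d) / 2 ∧ y = (s - d) / 2 ↔ x + y = s ∧ x - y = d := by
  constructor
  · rintro ⟨rfl, rfl⟩
    constructor <;> ring
  · rintro ⟨hs, hd⟩
    constructor
    · linear_combination (hs + hd) / 2
    · linear_combination (hs - hd) / 2

theorem second_period_foc_iff {b α bs c aljb aqjb as x : K} (hD : 2 * b + (1 - α) * bs ≠ 0) :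
    (aljb - b * x) + (aqjb - b * x) + (1 - α) * (as - bs * x)
        - (x - c) * (2 * b + (1 - α) * bs) = 0 ↔
      x = (1 / 2) * ((aljb + aqjb + (1 - α) * as) / (2 * b + (1 - α) * bs) + c) := by
  rw [eq_half_mul_div_add_iff hD]
  constructor <;> intro h <;> linear_combination -h

theorem first_period_focs_iff_reduced {b l θ c1 c2 c a1 a2 ab x1 x2 x3 x4 : K}
    (hl : l ≠ 0) (hc : c = c1 + c2) :
    ((a1 - b * x1 - b * θ * x2 + l * (x3 - x1 - x2))
          - (x1 - c1) * (b + l) - (x2 - c2) * (b * θ + l)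
          + (x3 - c) * l + (x4 - c) * l = 0 ∧
        (a2 - b * θ * x1 - b * x2 + l * (x3 - x1 - x2))
          - (x1 - c1) * (b * θ + l) - (x2 - c2) * (b + l)
          + (x3 - c) * l + (x4 - c) * l = 0 ∧
        (x1 - c1) * l + (x2 - c2) * l + (ab - b * x3 + l * (x1 + x2 - x3))
          - (x3 - c) * (b + l) = 0) ↔
      (2 * ((b + l) * b * (1 + θ) + 2 * b * l) * x3
          = ((a1 + a2) * l + (b * (1 + θ) + 2 * l) * ab + 2 * (x4 - c) * l ^ 2)
            + ((b + l) * b * (1 + θ) + 2 * b * l) * c ∧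
        2 * l * ((x1 - c1 / 2) + (x2 - c2 / 2)) = (2 * x3 - c) * (b + l) - ab ∧
        2 * (b * (1 - θ)) * ((x1 - c1 / 2) - (x2 - c2 / 2)) = a1 - a2) := by
  subst hc
  constructor
  · rintro ⟨e1, e2, e3⟩
    refine ⟨?_, by linear_combination e3, by linear_combination e2 - e1⟩
    linear_combination -l * e1 - l * e2 - (b * (1 + θ) + 2 * l) * e3
  · rintro ⟨r3, r1, r2⟩
    refine ⟨mul_left_cancel₀ hl ?_, mul_left_cancel₀ hl ?_, by linear_combination r1⟩
    · linear_combination (-r3 - (b * (1 + θ) + 2 * l) * r1 - l * r2) / 2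
    · linear_combination (-r3 - (b * (1 + θ) + 2 * l) * r1 + l * r2) / 2

theorem first_period_focs_iff {b l θ c1 c2 c a1 a2 ab x1 x2 x3 x4 : K}
    (hl : l ≠ 0) (hbθ : b * (1 - θ) ≠ 0) (hD : (b + l) * b * (1 + θ) + 2 * b * l ≠ 0)
    (hc : c = c1 + c2) :
    ((a1 - b * x1 - b * θ * x2 + l * (x3 - x1 - x2))
          - (x1 - c1) * (b + l) - (x2 - c2) * (b * θ + l)
          + (x3 - c) * l + (x4 - c) * l = 0 ∧
        (a2 - b * θ * x1 - b * x2 + l * (x3 - x1 - x2))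
          - (x1 - c1) * (b * θ + l) - (x2 - c2) * (b + l)
          + (x3 - c) * l + (x4 - c) * l = 0 ∧
        (x1 - c1) * l + (x2 - c2) * l + (ab - b * x3 + l * (x1 + x2 - x3))
          - (x3 - c) * (b + l) = 0) ↔
      (x3 = (1 / 2) * (((a1 + a2) * l + (b * (1 + θ) + 2 * l) * ab) /
              ((b + l) * b * (1 + θ) + 2 * b * l)
            + 2 * (x4 - c) * l ^ 2 / ((b + l) * b * (1 + θ) + 2 * b * l) + c) ∧
        x1 = (1 / 4) * (a1 - a2) / (b * (1 - θ)) - ab / (4 * l)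
            + (2 * x3 - c) * (b + l) / (4 * l) + c1 / 2 ∧
        x2 = -(1 / 4) * (a1 - a2) / (b * (1 - θ)) - ab / (4 * l)
            + (2 * x3 - c) * (b + l) / (4 * l) + c2 / 2) := by
  rw [first_period_focs_iff_reduced hl hc, ← add_div, eq_half_mul_div_add_iff hD]
  refine and_congr_right' ?_
  rw [mul_comm (2 * l), ← eq_div_iff (mul_ne_zero two_ne_zero hl), mul_comm (2 * (b * (1 - θ))),
    ← eq_div_iff (mul_ne_zero two_ne_zero hbθ), ← div_div (a1 - a2), ← eq_add_div_two_and_eq_sub_div_two_iff]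
  constructor <;> rintro ⟨h1, h2⟩ <;> exact ⟨by linear_combination h1, by linear_combination h2⟩

theorem stmt14_general (b l θ α bs c1 c2 c a1 a2 ab aljb aqjb as : ℝ)
    (hl : 0 < l) (hc : c = c1 + c2)
    (h1 : 0 < b * (1 - θ)) (h2 : (b + l) * b * (1 + θ) + 2 * b * l ≠ 0)
    (h3 : 2 * b + (1 - α) * bs ≠ 0) :
    ∀ x1 x2 x3 x4 : ℝ,
      ((a1 - b * x1 - b * θ * x2 + l * (x3 - x1 - x2))
          - (x1 - c1) * (b + l) - (x2 - c2) * (b * θ + l)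
          + (x3 - c) * l + (x4 - c) * l = 0 ∧
        (a2 - b * θ * x1 - b * x2 + l * (x3 - x1 - x2))
          - (x1 - c1) * (b * θ + l) - (x2 - c2) * (b + l)
          + (x3 - c) * l + (x4 - c) * l = 0 ∧
        (x1 - c1) * l + (x2 - c2) * l + (ab - b * x3 + l * (x1 + x2 - x3))
          - (x3 - c) * (b + l) = 0 ∧
        (aljb - b * x4) + (aqjb - b * x4) + (1 - α) * (as - bs * x4)
          - (x4 - c) * (2 * b + (1 - α) * bs) = 0)
      ↔
      (x4 = (1 / 2) * ((aljb + aqjb + (1 - α) * as) / (2 * b + (1 - α) * bs) + c) ∧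
        x3 = (1 / 2) * (((a1 + a2) * l + (b * (1 + θ) + 2 * l) * ab) /
              ((b + l) * b * (1 + θ) + 2 * b * l)
            + ((aljb + aqjb + (1 - α) * as) / (2 * b + (1 - α) * bs) - c) * l ^ 2 /
              ((b + l) * b * (1 + θ) + 2 * b * l) + c) ∧
        x1 = (1 / 4) * (a1 - a2) / (b * (1 - θ)) - ab / (4 * l)
            + (2 * x3 - c) * (b + l) / (4 * l) + c1 / 2 ∧
        x2 = -(1 / 4) * (a1 - a2) / (b * (1 - θ)) - ab / (4 * l)
            + (2 * x3 - c) * (b + l) / (4 * l) + c2 / 2) := by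
  intro x1 x2 x3 x4
  rw [second_period_foc_iff h3, ← and_assoc, ← and_assoc, and_comm (b := x4 = _)]
  refine and_congr_right fun hx4 => ?_
  have hmargin : 2 * (x4 - c)
      = (aljb + aqjb + (1 - α) * as) / (2 * b + (1 - α) * bs) - c := by
    rw [hx4]
    ring
  rw [and_assoc, first_period_focs_iff hl.ne' h1.ne' h2 hc, hmargin]

/-- The first-order system of Theorem 1 (sub case 1) in `(p₁ⁱ¹, p₁ⁱ², p₁ᵇ, p₂ᵇ)` has a
unique solution, given by the closed-form expressions (14a)–(14d) of Theorem 1. -/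
theorem stmt14 (b l θ α bs c1 c2 c a1 a2 ab aljb aqjb as : ℝ)
    (hbl : b ≥ l) (hl : 0 < l) (hθ0 : 0 ≤ θ) (hθ1 : θ < 1)
    (hα0 : 0 ≤ α) (hα1 : α ≤ 1) (hbs : 0 < bs) (hc : c = c1 + c2)
    (h1 : 0 < b * (1 - θ)) (h2 : (b + l) * b * (1 + θ) + 2 * b * l ≠ 0)
    (h3 : 2 * b + (1 - α) * bs ≠ 0) :
    ∀ x1 x2 x3 x4 : ℝ,
      ((a1 - b * x1 - b * θ * x2 + l * (x3 - x1 - x2))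
          - (x1 - c1) * (b + l) - (x2 - c2) * (b * θ + l)
          + (x3 - c) * l + (x4 - c) * l = 0 ∧
        (a2 - b * θ * x1 - b * x2 + l * (x3 - x1 - x2))
          - (x1 - c1) * (b * θ + l) - (x2 - c2) * (b + l)
          + (x3 - c) * l + (x4 - c) * l = 0 ∧
        (x1 - c1) * l + (x2 - c2) * l + (ab - b * x3 + l * (x1 + x2 - x3))
          - (x3 - c) * (b + l) = 0 ∧
        (aljb - b * x4) + (aqjb - b * x4) + (1 - α) * (as - bs * x4)
          - (x4 - c) * (2 * b + (1 - α) * bs) = 0)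
      ↔
      (x4 = (1 / 2) * ((aljb + aqjb + (1 - α) * as) / (2 * b + (1 - α) * bs) + c) ∧
        x3 = (1 / 2) * (((a1 + a2) * l + (b * (1 + θ) + 2 * l) * ab) /
              ((b + l) * b * (1 + θ) + 2 * b * l)
            + ((aljb + aqjb + (1 - α) * as) / (2 * b + (1 - α) * bs) - c) * l ^ 2 /
              ((b + l) * b * (1 + θ) + 2 * b * l) + c) ∧
        x1 = (1 / 4) * (a1 - a2) / (b * (1 - θ)) - ab / (4 * l)
            + (2 * x3 - c) * (b + l) / (4 * l) + c1 / 2 ∧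
        x2 = -(1 / 4) * (a1 - a2) / (b * (1 - θ)) - ab / (4 * l)
            + (2 * x3 - c) * (b + l) / (4 * l) + c2 / 2) :=
  stmt14_general b l θ α bs c1 c2 c a1 a2 ab aljb aqjb as hl hc h1 h2 h3
end
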